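/- Let n ≥ 1 and d ≥ 1 be integers, P > 0, σ₀² > 0, ε > 0 with dP ≥ 2εσ₀². Set σ_pri² = (dP − 2εσ₀²)/(2εn + d), P' = P − σ_pri², and σ'² = σ₀² + n·σ_pri². For reals A, B, α, β define the per-coordinate risk r_{A,B,α,β}(t) = α²·(n(B−A)²·t(1−t) + σ'²) + (α·n·(A + (B−A)t) + β − t)² for t ∈ [0,1]. Then the infimum, over all (A, B, α, β) with A² ≤ P' and B² ≤ P', of d · sup_{t ∈ [0,1]} r_{A,B,α,β}(t) equals (d/(4(√n+1)²))·(1 + d/(2nε)) if σ'² ≤ n^{3/2} P', and (d/4)·1/(1 + n·(2nε/d)) if σ'² ≥ n^{3/2} P'. -/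

import Mathlib

/-!
Write `h = α (B - A)` for the gain of an estimator. The risks at `t = 0` and `t = 1` average
to at least `α²σ² + (n h - 1)² / 4`, the risk at `t = 1/2` is at least `α²σ² + n h² / 4`, and
the power constraint gives `α²σ² ≥ σ² h² / (4P')`. Minimising over `h` either the first bound
alone or a suitable convex combination of both gives the two lower bounds; the antipodal code
`A = -√P'`, `B = √P'` with `β = 1/2` and the optimal `α` attains them. Finally
`2εσ'² = dP'` turns the two values into the closed forms of the theorem.
-/

open Real

/-- Per-coordinate mean squared error of the affine estimator `αY + β` when `n` users each
transmit `A` (bit `0`) or `B` (bit `1`) over a Gaussian MAC with noise variance `σsq`,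
the bit being Bernoulli(`t`). -/
noncomputable def perCoordRisk (n : ℕ) (σsq A B α β t : ℝ) : ℝ :=
  α ^ 2 * ((n : ℝ) * (B - A) ^ 2 * t * (1 - t) + σsq) +
    (α * (n : ℝ) * (A + (B - A) * t) + β - t) ^ 2

/-- Worst-case (over `t ∈ [0,1]`) per-coordinate risk. -/
noncomputable def worstRisk (n : ℕ) (σsq A B α β : ℝ) : ℝ :=
  sSup (perCoordRisk n σsq A B α β '' Set.Icc (0 : ℝ) 1)

open Set

section Risk

variable {n : ℕ} {σsq P' A B α β : ℝ}

lemma perCoordRisk_le_worstRisk {t : ℝ} (ht : t ∈ Icc (0 : ℝ) 1) :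
    perCoordRisk n σsq A B α β t ≤ worstRisk n σsq A B α β :=
  le_csSup (isCompact_Icc.bddAbove_image (by unfold perCoordRisk; fun_prop)) ⟨t, ht, rfl⟩

lemma endpoints_le_worstRisk :
    α ^ 2 * σsq + (n * (α * (B - A)) - 1) ^ 2 / 4 ≤ worstRisk n σsq A B α β := by
  have h₀ : perCoordRisk n σsq A B α β 0 ≤ worstRisk n σsq A B α β :=
    perCoordRisk_le_worstRisk (left_mem_Icc.2 zero_le_one)
  have h₁ : perCoordRisk n σsq A B α β 1 ≤ worstRisk n σsq A B α β :=
    perCoordRisk_le_worstRisk (right_mem_Icc.2 zero_le_one)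
  simp only [perCoordRisk] at h₀ h₁
  nlinarith [sq_nonneg ((α * n * A + β) + (α * n * B + β - 1))]

lemma midpoint_le_worstRisk :
    α ^ 2 * σsq + n * (α * (B - A)) ^ 2 / 4 ≤ worstRisk n σsq A B α β := by
  have h : perCoordRisk n σsq A B α β (1 / 2) ≤ worstRisk n σsq A B α β :=
    perCoordRisk_le_worstRisk (by norm_num)
  simp only [perCoordRisk] at h
  nlinarith [sq_nonneg (α * n * (A + (B - A) * (1 / 2)) + β - 1 / 2)]

lemma mul_gain_sq_le_noise (hσ : 0 ≤ σsq) (hP' : 0 < P') (hA : A ^ 2 ≤ P')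
    (hB : B ^ 2 ≤ P') :
    σsq / (4 * P') * (α * (B - A)) ^ 2 ≤ α ^ 2 * σsq := by
  have hdist : (B - A) ^ 2 ≤ 4 * P' := by nlinarith [sq_nonneg (A + B)]
  rw [div_mul_eq_mul_div, div_le_iff₀ (by positivity)]
  nlinarith [mul_le_mul_of_nonneg_left hdist (mul_nonneg (sq_nonneg α) hσ)]

lemma highNoise_le_worstRisk (hσ : 0 < σsq) (hP' : 0 < P') (hA : A ^ 2 ≤ P')
    (hB : B ^ 2 ≤ P') :
    σsq / (4 * (σsq + n ^ 2 * P')) ≤ worstRisk n σsq A B α β := by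
  set h := α * (B - A)
  have hD : 0 < σsq + n ^ 2 * P' := by positivity
  have hquad :
      σsq / (4 * (σsq + n ^ 2 * P')) ≤ σsq / (4 * P') * h ^ 2 + (n * h - 1) ^ 2 / 4 := by
    have hsq : σsq / (4 * P') * h ^ 2 + (n * h - 1) ^ 2 / 4 - σsq / (4 * (σsq + n ^ 2 * P'))
        = ((σsq + n ^ 2 * P') * h - n * P') ^ 2 / (4 * P' * (σsq + n ^ 2 * P')) := by
      field_simp
      ring
    have : 0 ≤ ((σsq + n ^ 2 * P') * h - n * P') ^ 2 / (4 * P' * (σsq + n ^ 2 * P')) := by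
      positivity
    linarith
  exact hquad.trans <| (add_le_add_left (mul_gain_sq_le_noise hσ.le hP' hA hB) _).trans
    endpoints_le_worstRisk

lemma lowNoise_le_worstRisk (hn : 0 < n) (hσ : 0 ≤ σsq) (hP' : 0 < P') (hA : A ^ 2 ≤ P')
    (hB : B ^ 2 ≤ P') (hcase : σsq ≤ n * √n * P') :
    (1 + σsq / (n * P')) / (4 * (√n + 1) ^ 2) ≤ worstRisk n σsq A B α β := by
  have hn' : (0 : ℝ) < n := Nat.cast_pos.2 hn
  set w := √(n : ℝ)
  have hw : 0 < w := sqrt_pos.2 hn'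
  have hnw : (n : ℝ) = w ^ 2 := (sq_sqrt hn'.le).symm
  set h := α * (B - A)
  set W := worstRisk n σsq A B α β
  have hnoise := mul_gain_sq_le_noise (α := α) hσ hP' hA hB
  set E := σsq / (4 * P') * h ^ 2 + (n * h - 1) ^ 2 / 4
  set M := σsq / (4 * P') * h ^ 2 + n * h ^ 2 / 4
  have hE : E ≤ W := (add_le_add_left hnoise _).trans endpoints_le_worstRisk
  have hM : M ≤ W := (add_le_add_left hnoise _).trans midpoint_le_worstRisk
  set c := σsq / (n * P')
  have hc : 0 ≤ c := by positivity
  have hcw : c ≤ w := by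
    rw [div_le_iff₀ (by positivity)]
    linarith
  set l := (1 + c) / (w + 1)
  have hl : 0 ≤ l := by positivity
  have hl1 : l ≤ 1 := by rw [div_le_one (by positivity)]; linarith
  have hcomb : (1 + c) / (4 * (w + 1) ^ 2) ≤ l * E + (1 - l) * M := by
    have hsq : l * E + (1 - l) * M - (1 + c) / (4 * (w + 1) ^ 2)
        = (1 + c) * w * (w * (w + 1) * h - 1) ^ 2 / (4 * (w + 1) ^ 2) := by
      simp only [E, M, l, c, hnw]
      field_simp
      ring
    have : 0 ≤ (1 + c) * w * (w * (w + 1) * h - 1) ^ 2 / (4 * (w + 1) ^ 2) := by positivity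
    linarith
  have hmix := convex_Iic W hE hM hl (sub_nonneg.2 hl1) (by ring)
  rw [mem_Iic, smul_eq_mul, smul_eq_mul] at hmix
  exact hcomb.trans hmix

lemma perCoordRisk_antipodal (p t : ℝ) :
    perCoordRisk n σsq (-p) p α (1 / 2) t
      = α ^ 2 * (n * p ^ 2 + σsq)
        + (2 * t - 1) ^ 2 * ((α * n * p - 1 / 2) ^ 2 - α ^ 2 * n * p ^ 2) := by
  unfold perCoordRisk
  ring

lemma worstRisk_antipodal (p : ℝ) :
    worstRisk n σsq (-p) p α (1 / 2)
      = α ^ 2 * (n * p ^ 2 + σsq) + max ((α * n * p - 1 / 2) ^ 2 - α ^ 2 * n * p ^ 2) 0 := by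
  set k := (α * n * p - 1 / 2) ^ 2 - α ^ 2 * n * p ^ 2
  refine IsGreatest.csSup_eq ⟨?_, ?_⟩
  · rcases le_total k 0 with hk | hk
    · exact ⟨1 / 2, by norm_num, by rw [perCoordRisk_antipodal, max_eq_right hk]; ring⟩
    · exact ⟨0, left_mem_Icc.2 zero_le_one,
        by rw [perCoordRisk_antipodal, max_eq_left hk]; ring⟩
  · rintro x ⟨t, ⟨ht₀, ht₁⟩, rfl⟩
    have hu : (2 * t - 1) ^ 2 ≤ 1 := by nlinarith
    have hku : (2 * t - 1) ^ 2 * k ≤ max k 0 := by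
      rcases le_total k 0 with hk | hk
      · rw [max_eq_right hk]; exact mul_nonpos_of_nonneg_of_nonpos (sq_nonneg _) hk
      · rw [max_eq_left hk]; exact mul_le_of_le_one_left hk hu
    rw [perCoordRisk_antipodal]
    exact add_le_add_right hku _

end Risk

section Minimax

variable {n : ℕ} {σsq P' : ℝ}

lemma exists_worstRisk_eq_lowNoise (hn : 0 < n) (hP' : 0 < P') :
    ∃ A B α β : ℝ, A ^ 2 ≤ P' ∧ B ^ 2 ≤ P' ∧
      worstRisk n σsq A B α β = (1 + σsq / (n * P')) / (4 * (√n + 1) ^ 2) := by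
  have hn' : (0 : ℝ) < n := Nat.cast_pos.2 hn
  set w := √(n : ℝ)
  have hw : 0 < w := sqrt_pos.2 hn'
  have hnw : (n : ℝ) = w ^ 2 := (sq_sqrt hn'.le).symm
  set p := √P'
  have hp : 0 < p := sqrt_pos.2 hP'
  have hpP : P' = p ^ 2 := (sq_sqrt hP'.le).symm
  refine ⟨-p, p, 1 / (2 * w * (w + 1) * p), 1 / 2, by rw [neg_sq, hpP], hpP.ge, ?_⟩
  -- this gain makes the risk independent of `t`
  have hflat : (1 / (2 * w * (w + 1) * p) * n * p - 1 / 2) ^ 2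
      - (1 / (2 * w * (w + 1) * p)) ^ 2 * n * p ^ 2 = 0 := by
    rw [hnw]
    field_simp
    ring
  rw [worstRisk_antipodal, hflat, max_self, hnw, hpP]
  field_simp
  ring

lemma exists_worstRisk_eq_highNoise (hσ : 0 < σsq) (hP' : 0 < P')
    (hcase : n * √n * P' ≤ σsq) :
    ∃ A B α β : ℝ, A ^ 2 ≤ P' ∧ B ^ 2 ≤ P' ∧
      worstRisk n σsq A B α β = σsq / (4 * (σsq + n ^ 2 * P')) := by
  set p := √P'
  have hp : 0 < p := sqrt_pos.2 hP'
  have hpP : P' = p ^ 2 := (sq_sqrt hP'.le).symm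
  have hD : 0 < σsq + n ^ 2 * P' := by positivity
  refine ⟨-p, p, n * P' / (2 * p * (σsq + n ^ 2 * P')), 1 / 2, by rw [neg_sq, hpP], hpP.ge, ?_⟩
  have hcase' : (n : ℝ) ^ 3 * P' ^ 2 ≤ σsq ^ 2 := by
    have := pow_le_pow_left₀ (by positivity) hcase 2
    rwa [mul_pow, mul_pow, sq_sqrt (Nat.cast_nonneg n), ← pow_succ] at this
  have hk : (n * P' / (2 * p * (σsq + n ^ 2 * P')) * n * p - 1 / 2) ^ 2
      - (n * P' / (2 * p * (σsq + n ^ 2 * P'))) ^ 2 * n * p ^ 2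
      = (σsq ^ 2 - n ^ 3 * P' ^ 2) / (4 * (σsq + n ^ 2 * P') ^ 2) := by
    rw [hpP] at hD ⊢
    field_simp
    ring
  rw [worstRisk_antipodal, hk, max_eq_left (div_nonneg (by linarith) (by positivity))]
  rw [hpP] at hD ⊢
  field_simp
  ring

lemma sInf_mul_worstRisk_eq {d L : ℝ} (hd : 0 ≤ d)
    (hle : ∀ A B α β : ℝ, A ^ 2 ≤ P' → B ^ 2 ≤ P' → L ≤ worstRisk n σsq A B α β)
    (hL : ∃ A B α β : ℝ, A ^ 2 ≤ P' ∧ B ^ 2 ≤ P' ∧ worstRisk n σsq A B α β = L) :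
    sInf {x : ℝ | ∃ A B α β : ℝ, A ^ 2 ≤ P' ∧ B ^ 2 ≤ P' ∧
      x = d * worstRisk n σsq A B α β} = d * L := by
  refine IsLeast.csInf_eq ⟨?_, ?_⟩
  · obtain ⟨A, B, α, β, hA, hB, hW⟩ := hL
    exact ⟨A, B, α, β, hA, hB, by rw [hW]⟩
  · rintro x ⟨A, B, α, β, hA, hB, rfl⟩
    exact mul_le_mul_of_nonneg_left (hle A B α β hA hB) hd

end Minimax

theorem robust_bernoulli_minimax_risk_general
    (n d : ℕ)
    (P σ0sq ε : ℝ) (hσ0 : 0 < σ0sq) (hε : 0 < ε)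
    (hpow : (d : ℝ) * P ≥ 2 * ε * σ0sq)
    (σpri2 P' σ'sq : ℝ)
    (hσpri : σpri2 = ((d : ℝ) * P - 2 * ε * σ0sq) / (2 * ε * n + d))
    (hP' : P' = P - σpri2) (hσ' : σ'sq = σ0sq + (n : ℝ) * σpri2) :
    (σ'sq ≤ (n : ℝ) ^ ((3 : ℝ) / 2) * P' →
      sInf {x : ℝ | ∃ A B α β : ℝ, A ^ 2 ≤ P' ∧ B ^ 2 ≤ P' ∧
            x = (d : ℝ) * worstRisk n σ'sq A B α β}
        = ((d : ℝ) / (4 * (Real.sqrt n + 1) ^ 2)) * (1 + (d : ℝ) / (2 * (n : ℝ) * ε)))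
    ∧ (σ'sq ≥ (n : ℝ) ^ ((3 : ℝ) / 2) * P' →
      sInf {x : ℝ | ∃ A B α β : ℝ, A ^ 2 ≤ P' ∧ B ^ 2 ≤ P' ∧
            x = (d : ℝ) * worstRisk n σ'sq A B α β}
        = ((d : ℝ) / 4) * (1 / (1 + (n : ℝ) * (2 * (n : ℝ) * ε / d)))) := by
  have hσε : 0 < 2 * ε * σ0sq := by positivity
  have hd : (0 : ℝ) < d := (Nat.cast_nonneg d).lt_of_ne fun h => by
    rw [← h, zero_mul] at hpow
    linarith
  have hP : 0 < P := pos_of_mul_pos_right (hσε.trans_le hpow) hd.le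
  have hden : 0 < 2 * ε * n + d := by positivity
  have hσpri0 : 0 ≤ σpri2 := hσpri ▸ div_nonneg (by linarith) hden.le
  have hP'0 : 0 < P' := by
    rw [hP', hσpri, sub_pos, div_lt_iff₀ hden]
    nlinarith [mul_pos hε hσ0, mul_nonneg (mul_nonneg hε.le (Nat.cast_nonneg n)) hP.le]
  have hσ'0 : 0 < σ'sq := hσ' ▸ add_pos_of_pos_of_nonneg hσ0 (by positivity)
  have hbudget : 2 * ε * σ'sq = d * P' := by
    rw [hσ', hP', hσpri]
    field_simp
    ring
  have hpow32 : (n : ℝ) ^ ((3 : ℝ) / 2) = n * √n := by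
    rw [show (3 : ℝ) / 2 = 1 + 1 / 2 by norm_num, rpow_add' (Nat.cast_nonneg n) (by norm_num),
      rpow_one, sqrt_eq_rpow]
  rw [hpow32]
  refine ⟨fun hc => ?_, fun hc => ?_⟩
  · have hn : 0 < n := Nat.pos_of_ne_zero fun h => by simp [h] at hc; linarith
    rw [sInf_mul_worstRisk_eq hd.le
      (fun A B α β hA hB => lowNoise_le_worstRisk hn hσ'0.le hP'0 hA hB hc)
      (exists_worstRisk_eq_lowNoise hn hP'0)]
    have hratio : σ'sq / (n * P') = d / (2 * n * ε) := by
      rw [div_eq_div_iff (by positivity) (by positivity)]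
      linear_combination (n : ℝ) * hbudget
    rw [hratio]
    ring
  · rw [sInf_mul_worstRisk_eq hd.le
      (fun A B α β hA hB => highNoise_le_worstRisk hσ'0 hP'0 hA hB)
      (exists_worstRisk_eq_highNoise hσ'0 hP'0 hc)]
    rw [show P' = 2 * ε * σ'sq / d by rw [eq_div_iff hd.ne']; linarith]
    field_simp

/-- Corollary 2. Minimax error of the ε-robust over-the-air scheme for
the product Bernoulli model: with `σ_pri² = (dP − 2εσ₀²)/(2εn + d)`, `P' = P − σ_pri²`,
`σ'² = σ₀² + nσ_pri²`, the minimax risk equals `(d/(4(√n+1)²))(1 + d/(2nε))` when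
`σ'² ≤ n^{3/2}P'`, and `(d/4)/(1 + n·(2nε/d))` when `σ'² ≥ n^{3/2}P'`. -/
theorem robust_bernoulli_minimax_risk
    (n d : ℕ) (hn : 1 ≤ n) (hd : 1 ≤ d)
    (P σ0sq ε : ℝ) (hP : 0 < P) (hσ0 : 0 < σ0sq) (hε : 0 < ε)
    (hpow : (d : ℝ) * P ≥ 2 * ε * σ0sq)
    (σpri2 P' σ'sq : ℝ)
    (hσpri : σpri2 = ((d : ℝ) * P - 2 * ε * σ0sq) / (2 * ε * n + d))
    (hP' : P' = P - σpri2) (hσ' : σ'sq = σ0sq + (n : ℝ) * σpri2) :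
    (σ'sq ≤ (n : ℝ) ^ ((3 : ℝ) / 2) * P' →
      sInf {x : ℝ | ∃ A B α β : ℝ, A ^ 2 ≤ P' ∧ B ^ 2 ≤ P' ∧
            x = (d : ℝ) * worstRisk n σ'sq A B α β}
        = ((d : ℝ) / (4 * (Real.sqrt n + 1) ^ 2)) * (1 + (d : ℝ) / (2 * (n : ℝ) * ε)))
    ∧ (σ'sq ≥ (n : ℝ) ^ ((3 : ℝ) / 2) * P' →
      sInf {x : ℝ | ∃ A B α β : ℝ, A ^ 2 ≤ P' ∧ B ^ 2 ≤ P' ∧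
            x = (d : ℝ) * worstRisk n σ'sq A B α β}
        = ((d : ℝ) / 4) * (1 / (1 + (n : ℝ) * (2 * (n : ℝ) * ε / d)))) :=
  robust_bernoulli_minimax_risk_general n d P σ0sq ε hσ0 hε hpow σpri2 P' σ'sq hσpri hP' hσ'
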